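/- Let q, h, a : ℝ → E³ together with a conical curvature κ : ℝ → ℝ be a Frenet frame of a ruled surface, and let u ∈ E³ be a fixed vector and c ∈ ℝ a constant with ⟪h(s), u⟫ = c for all s. Then for every s, ⟪a(s), u⟫² · (1 + κ(s)²) = ‖u‖² − c²; in particular this quantity is constant along the surface. -/

import Mathlib

/-!
Differentiating `⟪h, u⟫ = c` with the Frenet equation for `h'` gives `⟪q, u⟫ = κ ⟪a, u⟫`.
Since `q, h, a` is an orthonormal basis of `E³`, Parseval gives
`‖u‖² = ⟪q, u⟫² + ⟪h, u⟫² + ⟪a, u⟫² = (1 + κ²) ⟪a, u⟫² + c²`.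
-/

open RealInnerProductSpace Matrix

noncomputable section

abbrev E3 := EuclideanSpace ℝ (Fin 3)

/-- A Frenet frame of a ruled surface: `q`, `h`, `a` are orthonormal at every
parameter and satisfy the Frenet equations with conical curvature `κ`. -/
def IsFrenetFrame (q h a : ℝ → E3) (κ : ℝ → ℝ) : Prop :=
  (∀ s, ⟪q s, q s⟫ = 1 ∧ ⟪h s, h s⟫ = 1 ∧ ⟪a s, a s⟫ = 1 ∧
        ⟪q s, h s⟫ = 0 ∧ ⟪q s, a s⟫ = 0 ∧ ⟪h s, a s⟫ = 0) ∧
  (∀ s, HasDerivAt q (h s) s) ∧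
  (∀ s, HasDerivAt h (-q s + κ s • a s) s) ∧
  (∀ s, HasDerivAt a (-(κ s • h s)) s)

/-- The Darboux vector of the frame. -/
def darboux (q a : ℝ → E3) (κ : ℝ → ℝ) : ℝ → E3 := fun s => κ s • q s + a s

theorem Orthonormal.sum_sq_inner_eq_norm_sq_of_card_eq_finrank
    {ι E : Type*} [Fintype ι] [NormedAddCommGroup E] [InnerProductSpace ℝ E]
    [FiniteDimensional ℝ E]
    {v : ι → E} (hv : Orthonormal ℝ v) (hcard : Fintype.card ι = Module.finrank ℝ E) (x : E) :
    ∑ i, ⟪v i, x⟫ ^ 2 = ‖x‖ ^ 2 := by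
  have hspan := (hv.linearIndependent.span_eq_top_of_card_eq_finrank' hcard).ge
  simpa only [OrthonormalBasis.coe_mk] using (OrthonormalBasis.mk hv hspan).sum_sq_inner_right x

theorem HasDerivAt.inner_eq_zero_of_forall_inner_eq
    {E : Type*} [NormedAddCommGroup E] [InnerProductSpace ℝ E]
    {f : ℝ → E} {f' u : E} {x c : ℝ} (hf : HasDerivAt f f' x) (hc : ∀ t, ⟪f t, u⟫ = c) :
    ⟪f', u⟫ = 0 := by
  have hderiv : HasDerivAt (fun t => ⟪f t, u⟫) ⟪f', u⟫ x := by
    simpa using hf.inner ℝ (hasDerivAt_const x u)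
  simp only [hc] at hderiv
  exact hderiv.unique (hasDerivAt_const x c)

namespace IsFrenetFrame

variable {q h a : ℝ → E3} {κ : ℝ → ℝ}

theorem orthonormal (hF : IsFrenetFrame q h a κ) (s : ℝ) :
    Orthonormal ℝ ![q s, h s, a s] := by
  obtain ⟨hqq, hhh, haa, hqh, hqa, hha⟩ := hF.1 s
  rw [orthonormal_iff_ite]
  intro i j
  fin_cases i <;> fin_cases j <;> simp_all [real_inner_comm]

theorem inner_q_eq_of_forall_inner_h_eq (hF : IsFrenetFrame q h a κ) {u : E3} {c : ℝ}
    (hc : ∀ t, ⟪h t, u⟫ = c) (s : ℝ) : ⟪q s, u⟫ = κ s * ⟪a s, u⟫ := by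
  have hslant := (hF.2.2.1 s).inner_eq_zero_of_forall_inner_eq hc
  rw [inner_add_left, inner_neg_left, real_inner_smul_left] at hslant
  linarith

theorem sum_sq_inner_eq_norm_sq (hF : IsFrenetFrame q h a κ) (u : E3) (s : ℝ) :
    ⟪q s, u⟫ ^ 2 + ⟪h s, u⟫ ^ 2 + ⟪a s, u⟫ ^ 2 = ‖u‖ ^ 2 := by
  simpa [Fin.sum_univ_three, add_assoc] using
    (hF.orthonormal s).sum_sq_inner_eq_norm_sq_of_card_eq_finrank (by simp) u

end IsFrenetFrame

theorem a_component_sq_mul_const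
    (q h a : ℝ → E3) (κ : ℝ → ℝ)
    (hframe : IsFrenetFrame q h a κ)
    (u : E3) (c : ℝ)
    (hslant : ∀ s, ⟪h s, u⟫ = c) :
    ∀ s, ⟪a s, u⟫ ^ 2 * (1 + κ s ^ 2) = ‖u‖ ^ 2 - c ^ 2 := by
  intro s
  rw [← hframe.sum_sq_inner_eq_norm_sq u s, hframe.inner_q_eq_of_forall_inner_h_eq hslant s,
    hslant s]
  ring
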